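/- For every process term p, the formula χ(p) defined recursively by χ(ω) = ⊤ and, for p ≠ ω, χ(p) = (⋀ over transitions p →a p' with a ∈ A^r of ⟨a⟩χ(p')) ∧ (⋀ over b ∈ A^l of [b](⋁ over transitions p →b p' of χ(p'))), is a characteristic formula for p. -/
import Mathlib



/-- Process terms: `p ::= 0 | ω | a.p | p + p`. -/
inductive Proc (Act : Type) : Type where
  | nil : Proc Act
  | omega : Proc Act
  | act : Act → Proc Act → Proc Act
  | plus : Proc Act → Proc Act → Proc Act
deriving DecidableEq

/-- Operational semantics of process terms.  The parameter `isL : Act → Bool`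
describes the partition `A = A^l ⊎ A^r`: `isL a = true` means `a ∈ A^l`
(contravariant), `isL a = false` means `a ∈ A^r` (covariant). -/
inductive Step {Act : Type} (isL : Act → Bool) : Proc Act → Act → Proc Act → Prop where
  | omega {b : Act} : isL b = true → Step isL .omega b .omega
  | act {a : Act} {p : Proc Act} : Step isL (.act a p) a p
  | plusL {p q p' : Proc Act} {a : Act} : Step isL p a p' → Step isL (.plus p q) a p'
  | plusR {p q q' : Proc Act} {a : Act} : Step isL q a q' → Step isL (.plus p q) a q'

/-- A covariant-contravariant simulation over an LTS with state space `S`,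
actions `Act` partitioned by `isL` (`true` = contravariant `A^l`,
`false` = covariant `A^r`) and transition relation `tr`. -/
def IsCCSim {S Act : Type} (isL : Act → Bool) (tr : S → Act → S → Prop)
    (R : S → S → Prop) : Prop :=
  ∀ p q, R p q →
    ((∀ a, isL a = false → ∀ p', tr p a p' → ∃ q', tr q a q' ∧ R p' q') ∧
     (∀ b, isL b = true → ∀ q', tr q b q' → ∃ p', tr p b p' ∧ R p' q'))

/-- The covariant-contravariant simulation preorder `p ≲cc q` over an LTS. -/
def CCLE {S Act : Type} (isL : Act → Bool) (tr : S → Act → S → Prop) (p q : S) : Prop :=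
  ∃ R, IsCCSim isL tr R ∧ R p q

/-- `p ≲cc q` for process terms. -/
def ccle {Act : Type} (isL : Act → Bool) (p q : Proc Act) : Prop :=
  CCLE isL (Step isL) p q

/-- The covariant-contravariant modal logic `L`:
`φ ::= ⊥ | ⊤ | φ∧φ | φ∨φ | [b]φ | ⟨a⟩φ` with `a ∈ A^r` (`isL a = false`)
and `b ∈ A^l` (`isL b = true`). -/
inductive Formula (Act : Type) (isL : Act → Bool) : Type where
  | bot : Formula Act isL
  | top : Formula Act isL
  | and : Formula Act isL → Formula Act isL → Formula Act isL
  | or : Formula Act isL → Formula Act isL → Formula Act isL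
  | box : {x : Act // isL x = true} → Formula Act isL → Formula Act isL
  | dia : {x : Act // isL x = false} → Formula Act isL → Formula Act isL

/-- The satisfaction relation `p ⊨ φ`. -/
def Sat {Act : Type} (isL : Act → Bool) : Proc Act → Formula Act isL → Prop
  | _, .bot => False
  | _, .top => True
  | p, .and φ ψ => Sat isL p φ ∧ Sat isL p ψ
  | p, .or φ ψ => Sat isL p φ ∨ Sat isL p ψ
  | p, .box b φ => ∀ p', Step isL p b.1 p' → Sat isL p' φ
  | p, .dia a φ => ∃ p', Step isL p a.1 p' ∧ Sat isL p' φ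

/-- `φ ≤ ψ`: every process term satisfying `φ` satisfies `ψ`. -/
def FormLe {Act : Type} (isL : Act → Bool) (φ ψ : Formula Act isL) : Prop :=
  ∀ p, Sat isL p φ → Sat isL p ψ

/-- `φ ≡ ψ`: `φ` and `ψ` are satisfied by exactly the same process terms. -/
def FormEquiv {Act : Type} (isL : Act → Bool) (φ ψ : Formula Act isL) : Prop :=
  ∀ p, Sat isL p φ ↔ Sat isL p ψ

/-- `φ` is a characteristic formula for `p`: `p ⊨ φ` and every `q` satisfying
`φ` lies above `p` in the cc-simulation preorder. -/
def CharFor {Act : Type} (isL : Act → Bool) (φ : Formula Act isL) (p : Proc Act) : Prop :=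
  Sat isL p φ ∧ ∀ q, Sat isL q φ → ccle isL p q

/-- The formula `φ` is represented by the (single) process term `p`. -/
def Represents {Act : Type} (isL : Act → Bool) (p : Proc Act) (φ : Formula Act isL) : Prop :=
  ∀ q, Sat isL q φ ↔ ccle isL p q

/-- Finite conjunction of a list of formulae (the empty conjunction is `⊤`). -/
def listAnd {Act : Type} (isL : Act → Bool) : List (Formula Act isL) → Formula Act isL
  | [] => .top
  | φ :: l => .and φ (listAnd isL l)

/-- Finite disjunction of a list of formulae (the empty disjunction is `⊥`). -/
def listOr {Act : Type} (isL : Act → Bool) : List (Formula Act isL) → Formula Act isL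
  | [] => .bot
  | φ :: l => .or φ (listOr isL l)

/-- Size of a process term (its length in symbols). -/
def psize {Act : Type} : Proc Act → Nat
  | .nil => 1
  | .omega => 1
  | .act _ p => psize p + 1
  | .plus p q => psize p + psize q + 1

/-- The list of `a`-successors of a process term. -/
def succs {Act : Type} [DecidableEq Act] (isL : Act → Bool) : Proc Act → Act → List (Proc Act)
  | .nil, _ => []
  | .omega, b => if isL b then [.omega] else []
  | .act a p, c => if a = c then [p] else []
  | .plus p q, c => succs isL p c ++ succs isL q c

theorem psize_pos {Act : Type} (p : Proc Act) : 0 < psize p := by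
  cases p <;> simp [psize]

theorem step_iff_mem_succs {Act : Type} [DecidableEq Act] (isL : Act → Bool)
    (p : Proc Act) (a : Act) (p' : Proc Act) :
    Step isL p a p' ↔ p' ∈ succs isL p a := by
  constructor
  · intro h
    induction h with
    | omega hb => simp [succs, hb]
    | act => simp [succs]
    | plusL _ ih => simp [succs]; exact Or.inl ih
    | plusR _ ih => simp [succs]; exact Or.inr ih
  · intro h
    induction p generalizing p' with
    | nil => simp [succs] at h
    | omega =>
        by_cases hb : isL a = true <;> simp [succs, hb] at h
        subst h; exact Step.omega hb
    | act b q =>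
        by_cases hb : b = a <;> simp [succs, hb] at h
        subst h; subst hb; exact Step.act
    | plus q r ihq ihr =>
        simp [succs] at h
        rcases h with h | h
        · exact Step.plusL (ihq _ h)
        · exact Step.plusR (ihr _ h)

theorem mem_succs_psize {Act : Type} [DecidableEq Act] {isL : Act → Bool}
    {p p' : Proc Act} {a : Act} (h : p' ∈ succs isL p a) :
    p = Proc.omega ∨ psize p' < psize p := by
  induction p generalizing p' with
  | nil => simp [succs] at h
  | omega => exact Or.inl rfl
  | act b q =>
      right
      by_cases hb : b = a <;> simp [succs, hb] at h
      subst h; simp [psize]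
  | plus q r ihq ihr =>
      right
      simp [succs] at h
      rcases h with h | h
      · rcases ihq h with rfl | hlt
        · have hq : p' = Proc.omega := by
            by_cases hb : isL a = true <;> simp [succs, hb] at h
            exact h
          subst hq
          have := psize_pos r
          simp only [psize]; omega
        · have := psize_pos r
          simp only [psize]; omega
      · rcases ihr h with rfl | hlt
        · have hq : p' = Proc.omega := by
            by_cases hb : isL a = true <;> simp [succs, hb] at h
            exact h
          subst hq
          have := psize_pos q
          simp only [psize]; omega
        · have := psize_pos q
          simp only [psize]; omega

/-- The characteristic formula `χ(p)`, defined recursively by `χ(ω) = ⊤` and,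
for `p ≠ ω`,
`χ(p) = ⋀_{p →a p', a ∈ A^r} ⟨a⟩χ(p') ∧ ⋀_{b ∈ A^l} [b] (⋁_{p →b p'} χ(p'))`. -/
noncomputable def chi {Act : Type} [Fintype Act] [DecidableEq Act] (isL : Act → Bool)
    (p : Proc Act) : Formula Act isL :=
  if h : p = Proc.omega then Formula.top
  else
    Formula.and
      (listAnd isL ((Finset.univ : Finset {x : Act // isL x = false}).toList.map (fun a =>
        listAnd isL ((succs isL p a.1).attach.map (fun p' =>
          Formula.dia a (chi isL p'.1))))))
      (listAnd isL ((Finset.univ : Finset {x : Act // isL x = true}).toList.map (fun b =>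
        Formula.box b (listOr isL ((succs isL p b.1).attach.map (fun p' =>
          chi isL p'.1))))))
termination_by psize p
decreasing_by
  · rcases mem_succs_psize p'.2 with h' | h'
    · exact absurd h' h
    · exact h'
  · rcases mem_succs_psize p'.2 with h' | h'
    · exact absurd h' h
    · exact h'

theorem sat_listAnd {Act : Type} {isL : Act → Bool} {q : Proc Act}
    {l : List (Formula Act isL)} :
    Sat isL q (listAnd isL l) ↔ ∀ φ ∈ l, Sat isL q φ := by
  induction l with
  | nil => simp [listAnd, Sat]
  | cons φ l ih => simp [listAnd, Sat, ih]

theorem sat_listOr {Act : Type} {isL : Act → Bool} {q : Proc Act}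
    {l : List (Formula Act isL)} :
    Sat isL q (listOr isL l) ↔ ∃ φ ∈ l, Sat isL q φ := by
  induction l with
  | nil => simp [listOr, Sat]
  | cons φ l ih => simp [listOr, Sat, ih]

theorem sat_chi_iff {Act : Type} [Fintype Act] [DecidableEq Act] {isL : Act → Bool}
    {p : Proc Act} (hp : p ≠ Proc.omega) (q : Proc Act) :
    Sat isL q (chi isL p) ↔
      ((∀ a : Act, isL a = false → ∀ p' ∈ succs isL p a,
          ∃ q', Step isL q a q' ∧ Sat isL q' (chi isL p')) ∧
       (∀ b : Act, isL b = true → ∀ q', Step isL q b q' →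
          ∃ p' ∈ succs isL p b, Sat isL q' (chi isL p'))) := by
  rw [chi, dif_neg hp]
  show (Sat isL q _ ∧ Sat isL q _) ↔ _
  constructor
  · rintro ⟨h1, h2⟩
    constructor
    · intro a ha p' hp'
      rw [sat_listAnd] at h1
      have := h1 (listAnd isL ((succs isL p a).attach.map
          (fun p' => Formula.dia ⟨a, ha⟩ (chi isL p'.1)))) (by
        simp only [List.mem_map]
        exact ⟨⟨a, ha⟩, by simp, rfl⟩)
      rw [sat_listAnd] at this
      have := this (Formula.dia ⟨a, ha⟩ (chi isL p')) (by
        simp only [List.mem_map]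
        exact ⟨⟨p', hp'⟩, List.mem_attach _ _, rfl⟩)
      exact this
    · intro b hb q' hq'
      rw [sat_listAnd] at h2
      have := h2 (Formula.box ⟨b, hb⟩ (listOr isL ((succs isL p b).attach.map
          (fun p' => chi isL p'.1)))) (by
        simp only [List.mem_map]
        exact ⟨⟨b, hb⟩, by simp, rfl⟩)
      have := this q' hq'
      rw [sat_listOr] at this
      obtain ⟨φ, hφ, hsat⟩ := this
      simp only [List.mem_map] at hφ
      obtain ⟨⟨p', hp'⟩, -, rfl⟩ := hφ
      exact ⟨p', hp', hsat⟩
  · rintro ⟨h1, h2⟩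
    constructor
    · rw [sat_listAnd]
      intro φ hφ
      simp only [List.mem_map] at hφ
      obtain ⟨⟨a, ha⟩, -, rfl⟩ := hφ
      rw [sat_listAnd]
      intro ψ hψ
      simp only [List.mem_map] at hψ
      obtain ⟨⟨p', hp'⟩, -, rfl⟩ := hψ
      exact h1 a ha p' hp'
    · rw [sat_listAnd]
      intro φ hφ
      simp only [List.mem_map] at hφ
      obtain ⟨⟨b, hb⟩, -, rfl⟩ := hφ
      intro q' hq'
      rw [sat_listOr]
      obtain ⟨p', hp', hsat⟩ := h2 b hb q' hq'
      exact ⟨chi isL p', by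
        simp only [List.mem_map]
        exact ⟨⟨p', hp'⟩, List.mem_attach _ _, rfl⟩, hsat⟩

theorem sat_chi_self {Act : Type} [Fintype Act] [DecidableEq Act] (isL : Act → Bool)
    (p : Proc Act) : Sat isL p (chi isL p) := by
  by_cases hp : p = Proc.omega
  · subst hp; rw [chi]; simp [Sat]
  · rw [sat_chi_iff hp]
    constructor
    · intro a ha p' hp'
      refine ⟨p', (step_iff_mem_succs isL p a p').2 hp', ?_⟩
      rcases mem_succs_psize hp' with h | h
      · exact absurd h hp
      · exact sat_chi_self isL p'
    · intro b hb q' hq'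
      have hq'' := (step_iff_mem_succs isL p b q').1 hq'
      refine ⟨q', hq'', ?_⟩
      rcases mem_succs_psize hq'' with h | h
      · exact absurd h hp
      · exact sat_chi_self isL q'
termination_by psize p

theorem chi_ccsim {Act : Type} [Fintype Act] [DecidableEq Act] (isL : Act → Bool) :
    IsCCSim isL (Step isL) (fun p q => Sat isL q (chi isL p)) := by
  intro p q hR
  by_cases hp : p = Proc.omega
  · subst hp
    constructor
    · intro a ha p' hstep
      cases hstep with
      | omega hb => rw [ha] at hb; cases hb
    · intro b hb q' _
      exact ⟨Proc.omega, Step.omega hb, by simp [chi, Sat]⟩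
  · rw [sat_chi_iff hp] at hR
    constructor
    · intro a ha p' hstep
      exact hR.1 a ha p' ((step_iff_mem_succs isL p a p').1 hstep)
    · intro b hb q' hstep
      obtain ⟨p', hp', hsat⟩ := hR.2 b hb q' hstep
      exact ⟨p', (step_iff_mem_succs isL p b p').2 hp', hsat⟩

/-- For every process term `p`, the formula `χ(p)` is a characteristic formula
for `p`. -/
theorem chi_charFor {Act : Type} [Fintype Act] [DecidableEq Act] (isL : Act → Bool)
    (p : Proc Act) :
    CharFor isL (chi isL p) p := by
  exact ⟨sat_chi_self isL p,
    fun q hq => ⟨fun p q => Sat isL q (chi isL p), chi_ccsim isL, hq⟩⟩
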